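/- Let A be symmetric positive semidefinite with partial Cholesky Πᵀ A Π = L Lᵀ + [[0,0],[0,S]], L ∈ ℝ^{n×k}, and suppose ‖S‖₂ ≤ τ·λ_{k+1}(A) for some τ ≥ 1. Then for 1 ≤ j ≤ k: σ_j²(L) ≥ λ_j(A) − τ·λ_{k+1}(A), that is, σ_j²(L) ≥ λ_j(A)·(1 − τ·λ_{k+1}(A)/λ_j(A)). -/

import Mathlib

open Matrix

/-- The `j`-th largest eigenvalue (0-based index `j`) of a Hermitian matrix. -/
noncomputable def eigDesc {n : ℕ} {A : Matrix (Fin n) (Fin n) ℝ} (hA : A.IsHermitian)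
    (j : Fin n) : ℝ :=
  (hA.eigenvalues ∘ Tuple.sort hA.eigenvalues) j.rev

/-- The spectral norm (largest singular value) of a real matrix. -/
noncomputable def specNorm {m n : ℕ} (X : Matrix (Fin m) (Fin n) ℝ) : ℝ :=
  Real.sqrt (⨆ j, (Matrix.isHermitian_conjTranspose_mul_self X).eigenvalues j)

/-- The `j`-th largest singular value (0-based index `j`) of a real matrix. -/
noncomputable def sval {m k : ℕ} (X : Matrix (Fin m) (Fin k) ℝ) (j : Fin k) : ℝ :=
  Real.sqrt (eigDesc (Matrix.isHermitian_conjTranspose_mul_self X) j)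


open Submodule

section aux
variable {n : ℕ} {M : Matrix (Fin n) (Fin n) ℝ}

lemma eigDesc_anti (hM : M.IsHermitian) : Antitone (eigDesc hM) := by
  intro i j hij
  exact Tuple.monotone_sort hM.eigenvalues (Fin.rev_le_rev.mpr hij)

/-- existence of descending orthonormal eigenvector family -/
lemma exists_desc_eigen (hM : M.IsHermitian) :
    ∃ v : Fin n → (Fin n → ℝ),
      (∀ s t, v s ⬝ᵥ v t = if s = t then 1 else 0) ∧
      (∀ t, M *ᵥ v t = eigDesc hM t • v t) := by
  classical
  set g := Tuple.sort hM.eigenvalues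
  refine ⟨fun t => ⇑(hM.eigenvectorBasis (g t.rev)), ?_, ?_⟩
  · intro s t
    have h := orthonormal_iff_ite.mp hM.eigenvectorBasis.orthonormal (g s.rev) (g t.rev)
    have h2 : (inner ℝ (hM.eigenvectorBasis (g s.rev)) (hM.eigenvectorBasis (g t.rev)) : ℝ)
        = (⇑(hM.eigenvectorBasis (g s.rev)) : Fin n → ℝ) ⬝ᵥ ⇑(hM.eigenvectorBasis (g t.rev)) := by
      simp [EuclideanSpace.inner_eq_star_dotProduct, dotProduct, mul_comm]
    rw [h2] at h
    rw [h]
    have : g s.rev = g t.rev ↔ s = t := by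
      constructor
      · intro hh
        have := g.injective hh
        exact Fin.rev_injective this
      · rintro rfl; rfl
    simp only [this]
  · intro t
    exact hM.mulVec_eigenvectorBasis (g t.rev)

end aux
section aux2
variable {n : ℕ} {M : Matrix (Fin n) (Fin n) ℝ}

lemma dot_sum_right {ι : Type*} (s : Finset ι) (y : Fin n → ℝ) (f : ι → (Fin n → ℝ)) :
    y ⬝ᵥ (∑ t ∈ s, f t) = ∑ t ∈ s, y ⬝ᵥ f t := by
  simp only [dotProduct, Finset.sum_apply, Finset.mul_sum]
  exact Finset.sum_comm

lemma sum_dot_left {ι : Type*} (s : Finset ι) (y : Fin n → ℝ) (f : ι → (Fin n → ℝ)) :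
    (∑ t ∈ s, f t) ⬝ᵥ y = ∑ t ∈ s, f t ⬝ᵥ y := by
  simp only [dotProduct, Finset.sum_apply, Finset.sum_mul]
  exact Finset.sum_comm

lemma mulVec_sum' {ι : Type*} (s : Finset ι) (f : ι → (Fin n → ℝ)) :
    M *ᵥ (∑ t ∈ s, f t) = ∑ t ∈ s, M *ᵥ f t := by
  funext i
  simp only [mulVec, Finset.sum_apply]
  exact dot_sum_right s (M i) f

lemma quad_compute {v : Fin n → (Fin n → ℝ)} {μ : Fin n → ℝ}
    (hon : ∀ s t, v s ⬝ᵥ v t = if s = t then 1 else 0)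
    (heig : ∀ t, M *ᵥ v t = μ t • v t)
    (s : Finset (Fin n)) (a : Fin n → ℝ) :
    (∑ t ∈ s, a t • v t) ⬝ᵥ (M *ᵥ (∑ t ∈ s, a t • v t)) = ∑ t ∈ s, μ t * a t ^ 2 ∧
    (∑ t ∈ s, a t • v t) ⬝ᵥ (∑ t ∈ s, a t • v t) = ∑ t ∈ s, a t ^ 2 := by
  classical
  have hMx : M *ᵥ (∑ t ∈ s, a t • v t) = ∑ t ∈ s, (a t * μ t) • v t := by
    rw [mulVec_sum']
    refine Finset.sum_congr rfl fun t _ => ?_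
    rw [mulVec_smul, heig t, smul_smul]
  have key : ∀ b : Fin n → ℝ, (∑ t ∈ s, a t • v t) ⬝ᵥ (∑ t ∈ s, b t • v t)
      = ∑ t ∈ s, a t * b t := by
    intro b
    rw [sum_dot_left]
    calc (∑ r ∈ s, (a r • v r) ⬝ᵥ (∑ t ∈ s, b t • v t))
        = ∑ r ∈ s, ∑ t ∈ s, a r * b t * (v r ⬝ᵥ v t) := by
          refine Finset.sum_congr rfl fun r _ => ?_
          rw [dot_sum_right]
          refine Finset.sum_congr rfl fun t _ => ?_
          rw [smul_dotProduct, dotProduct_smul, smul_eq_mul, smul_eq_mul]; ring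
      _ = ∑ r ∈ s, a r * b r := by
          refine Finset.sum_congr rfl fun r hr => ?_
          rw [Finset.sum_eq_single r]
          · rw [hon r r, if_pos rfl, mul_one]
          · intro t _ htr; rw [hon r t, if_neg (Ne.symm htr), mul_zero]
          · intro h; exact absurd hr h
  constructor
  · rw [hMx]
    have h2 : (∑ t ∈ s, a t • v t) ⬝ᵥ (∑ t ∈ s, (a t * μ t) • v t)
        = ∑ t ∈ s, a t * (a t * μ t) := key _
    rw [h2]
    exact Finset.sum_congr rfl fun t _ => by ring
  · rw [key a]
    exact Finset.sum_congr rfl fun t _ => (sq (a t)).symm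

lemma mem_span_repr {v : Fin n → (Fin n → ℝ)} {s : Finset (Fin n)} {x : Fin n → ℝ}
    (hx : x ∈ span ℝ (v '' s)) : ∃ a : Fin n → ℝ, x = ∑ t ∈ s, a t • v t := by
  classical
  have himg : (v '' s) = Set.range (fun t : s => v t) := by ext y; simp
  rw [himg, mem_span_range_iff_exists_fun] at hx
  obtain ⟨c, hc⟩ := hx
  refine ⟨fun t => if ht : t ∈ s then c ⟨t, ht⟩ else 0, ?_⟩
  rw [← hc]
  rw [← Finset.sum_attach s (fun t => (if ht : t ∈ s then c ⟨t, ht⟩ else 0) • v t)]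
  exact (Finset.sum_congr rfl fun t _ => by simp [t.2]).symm

lemma finrank_span_orthonormal {v : Fin n → (Fin n → ℝ)}
    (hon : ∀ s t, v s ⬝ᵥ v t = if s = t then 1 else 0) (s : Finset (Fin n)) :
    Module.finrank ℝ (span ℝ (v '' s)) = s.card := by
  classical
  have li : LinearIndependent ℝ v := by
    rw [Fintype.linearIndependent_iff]
    intro c hc t
    have h1 : v t ⬝ᵥ (∑ i : Fin n, c i • v i) = c t := by
      rw [dot_sum_right]
      rw [Finset.sum_eq_single t]
      · rw [dotProduct_smul, hon t t, if_pos rfl, smul_eq_mul, mul_one]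
      · intro r _ hrt; rw [dotProduct_smul, hon t r, if_neg (Ne.symm hrt), smul_eq_mul, mul_zero]
      · intro h; exact absurd (Finset.mem_univ t) h
    rw [hc] at h1
    simpa using h1.symm
  have himg : (v '' s) = Set.range (v ∘ (Subtype.val : s → Fin n)) := by
    rw [Set.range_comp, Subtype.range_coe_subtype]
    simp
  rw [himg, finrank_span_eq_card (li.comp _ Subtype.val_injective)]
  simp

lemma exists_ne_zero_mem_inf {V W : Submodule ℝ (Fin n → ℝ)}
    (h : n < Module.finrank ℝ V + Module.finrank ℝ W) :
    ∃ x : Fin n → ℝ, x ≠ 0 ∧ x ∈ V ∧ x ∈ W := by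
  have hsum := Submodule.finrank_sup_add_finrank_inf_eq V W
  have htop : Module.finrank ℝ (V ⊔ W : Submodule ℝ (Fin n → ℝ)) ≤ n := by
    simpa [Module.finrank_pi] using Submodule.finrank_le (V ⊔ W)
  have hpos : 0 < Module.finrank ℝ (V ⊓ W : Submodule ℝ (Fin n → ℝ)) := by omega
  have hne : (V ⊓ W : Submodule ℝ (Fin n → ℝ)) ≠ ⊥ := by
    intro hbot
    rw [hbot] at hpos
    simp at hpos
  obtain ⟨x, hx, hx0⟩ := Submodule.exists_mem_ne_zero_of_ne_bot hne
  exact ⟨x, hx0, hx.1, hx.2⟩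

end aux2
section aux3
variable {n : ℕ} {M : Matrix (Fin n) (Fin n) ℝ}

lemma dot_self_nonneg (x : Fin n → ℝ) : 0 ≤ x ⬝ᵥ x :=
  Finset.sum_nonneg fun i _ => mul_self_nonneg _

lemma dot_self_pos {x : Fin n → ℝ} (hx : x ≠ 0) : 0 < x ⬝ᵥ x :=
  lt_of_le_of_ne (dot_self_nonneg x) fun h => hx (dotProduct_self_eq_zero.mp h.symm)

/-- T1: top subspace. -/
lemma exists_top_subspace (hM : M.IsHermitian) (i : Fin n) :
    ∃ W : Submodule ℝ (Fin n → ℝ), (i : ℕ) + 1 ≤ Module.finrank ℝ W ∧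
      ∀ x ∈ W, eigDesc hM i * (x ⬝ᵥ x) ≤ x ⬝ᵥ (M *ᵥ x) := by
  classical
  obtain ⟨v, hon, heig⟩ := exists_desc_eigen hM
  refine ⟨span ℝ (v '' (Finset.Iic i)), ?_, ?_⟩
  · rw [finrank_span_orthonormal hon, Fin.card_Iic]
  · intro x hx
    obtain ⟨a, rfl⟩ := mem_span_repr hx
    obtain ⟨hq, hn⟩ := quad_compute hon heig (Finset.Iic i) a
    rw [hq, hn, Finset.mul_sum]
    refine Finset.sum_le_sum fun t ht => ?_
    exact mul_le_mul_of_nonneg_right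
      (eigDesc_anti hM (Finset.mem_Iic.mp ht)) (sq_nonneg _)

/-- T2: bottom subspace. -/
lemma exists_bot_subspace (hM : M.IsHermitian) (i : Fin n) :
    ∃ V : Submodule ℝ (Fin n → ℝ), n - (i : ℕ) ≤ Module.finrank ℝ V ∧
      ∀ x ∈ V, x ⬝ᵥ (M *ᵥ x) ≤ eigDesc hM i * (x ⬝ᵥ x) := by
  classical
  obtain ⟨v, hon, heig⟩ := exists_desc_eigen hM
  refine ⟨span ℝ (v '' (Finset.Ici i)), ?_, ?_⟩
  · rw [finrank_span_orthonormal hon, Fin.card_Ici]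
  · intro x hx
    obtain ⟨a, rfl⟩ := mem_span_repr hx
    obtain ⟨hq, hn⟩ := quad_compute hon heig (Finset.Ici i) a
    rw [hq, hn, Finset.mul_sum]
    refine Finset.sum_le_sum fun t ht => ?_
    exact mul_le_mul_of_nonneg_right
      (eigDesc_anti hM (Finset.mem_Ici.mp ht)) (sq_nonneg _)

/-- lower master: a subspace of dim ≥ i+1 on which the quadratic form is ≥ c
forces the i-th descending eigenvalue to be ≥ c. -/
lemma le_eigDesc_of_subspace (hM : M.IsHermitian) (i : Fin n) (c : ℝ)
    (W : Submodule ℝ (Fin n → ℝ)) (hW : (i : ℕ) + 1 ≤ Module.finrank ℝ W)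
    (h : ∀ x ∈ W, c * (x ⬝ᵥ x) ≤ x ⬝ᵥ (M *ᵥ x)) : c ≤ eigDesc hM i := by
  obtain ⟨V, hVrk, hVq⟩ := exists_bot_subspace hM i
  have hi : (i : ℕ) < n := i.isLt
  obtain ⟨x, hx0, hxV, hxW⟩ := exists_ne_zero_mem_inf (V := V) (W := W) (by omega)
  have h1 := h x hxW
  have h2 := hVq x hxV
  have := h1.trans h2
  exact le_of_mul_le_mul_right this (dot_self_pos hx0)

/-- global bound by the (unsorted) sup of eigenvalues. -/
lemma quad_le_iSup (hM : M.IsHermitian) (hn : 0 < n) (x : Fin n → ℝ) :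
    x ⬝ᵥ (M *ᵥ x) ≤ (⨆ j, hM.eigenvalues j) * (x ⬝ᵥ x) := by
  obtain ⟨V, hVrk, hVq⟩ := exists_bot_subspace hM ⟨0, hn⟩
  have hVtop : V = ⊤ := by
    apply Submodule.eq_top_of_finrank_eq
    refine le_antisymm (by simpa [Module.finrank_pi] using Submodule.finrank_le V) ?_
    simpa [Module.finrank_pi] using hVrk
  have h1 := hVq x (hVtop ▸ Submodule.mem_top)
  refine h1.trans (mul_le_mul_of_nonneg_right ?_ (dot_self_nonneg x))
  have : eigDesc hM ⟨0, hn⟩ = hM.eigenvalues (Tuple.sort hM.eigenvalues (⟨0, hn⟩ : Fin n).rev) :=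
    rfl
  rw [this]
  exact le_ciSup (Set.Finite.bddAbove (Set.finite_range _)) _

end aux3
section aux4

lemma finrank_map_inj {n p : ℕ} (f : (Fin n → ℝ) →ₗ[ℝ] (Fin p → ℝ))
    (T : Submodule ℝ (Fin n → ℝ)) (hf : ∀ x ∈ T, f x = 0 → x = 0) :
    Module.finrank ℝ (T.map f) = Module.finrank ℝ T := by
  have hker : LinearMap.ker (f.domRestrict T) = ⊥ := by
    rw [Submodule.eq_bot_iff]
    rintro ⟨x, hxT⟩ hx
    have : f x = 0 := hx
    have := hf x hxT this
    exact Subtype.ext this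
  have := LinearMap.finrank_range_add_finrank_ker (f.domRestrict T)
  rw [hker, finrank_bot, add_zero, LinearMap.range_domRestrict] at this
  rw [this]

lemma eigDesc_nonneg {n : ℕ} {M : Matrix (Fin n) (Fin n) ℝ} (hM : M.PosSemidef)
    (i : Fin n) : 0 ≤ eigDesc hM.isHermitian i :=
  hM.eigenvalues_nonneg _

lemma posSemidef_transpose_mul_self' {p q : ℕ} (X : Matrix (Fin p) (Fin q) ℝ) :
    (Xᵀ * X).PosSemidef := by
  have := Matrix.posSemidef_conjTranspose_mul_self X
  rwa [Matrix.conjTranspose_eq_transpose_of_trivial] at this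

lemma specNorm_nonneg {p q : ℕ} (X : Matrix (Fin p) (Fin q) ℝ) : 0 ≤ specNorm X :=
  Real.sqrt_nonneg _

lemma quad_le_specNorm {p : ℕ} (hp : 0 < p) (S : Matrix (Fin p) (Fin p) ℝ)
    (y : Fin p → ℝ) : y ⬝ᵥ (S *ᵥ y) ≤ specNorm S * (y ⬝ᵥ y) := by
  set Λ : ℝ := ⨆ j, (Matrix.isHermitian_conjTranspose_mul_self S).eigenvalues j with hΛ
  have hΛ0 : 0 ≤ Λ := by
    refine le_trans ((Matrix.posSemidef_conjTranspose_mul_self S).eigenvalues_nonneg ⟨0, hp⟩) ?_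
    exact le_ciSup (Set.Finite.bddAbove (Set.finite_range _)) _
  have hSy : (S *ᵥ y) ⬝ᵥ (S *ᵥ y) = y ⬝ᵥ ((Sᵀ * S) *ᵥ y) := by
    rw [← Matrix.mulVec_mulVec, Matrix.dotProduct_mulVec y, Matrix.vecMul_transpose]
  have hq := quad_le_iSup (Matrix.isHermitian_conjTranspose_mul_self S) hp y
  have hCS : (y ⬝ᵥ (S *ᵥ y)) ^ 2 ≤ (y ⬝ᵥ y) * ((S *ᵥ y) ⬝ᵥ (S *ᵥ y)) := by
    have := Finset.sum_mul_sq_le_sq_mul_sq Finset.univ y (S *ᵥ y)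
    simpa [dotProduct, sq] using this
  by_cases hneg : y ⬝ᵥ (S *ᵥ y) ≤ 0
  · exact hneg.trans (mul_nonneg (specNorm_nonneg S) (dot_self_nonneg y))
  push_neg at hneg
  have h2 : (y ⬝ᵥ (S *ᵥ y)) ^ 2 ≤ Λ * (y ⬝ᵥ y) ^ 2 := by
    calc (y ⬝ᵥ (S *ᵥ y)) ^ 2 ≤ (y ⬝ᵥ y) * ((S *ᵥ y) ⬝ᵥ (S *ᵥ y)) := hCS
      _ ≤ (y ⬝ᵥ y) * (Λ * (y ⬝ᵥ y)) := by
          refine mul_le_mul_of_nonneg_left ?_ (dot_self_nonneg y)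
          rw [hSy]; exact hq
      _ = Λ * (y ⬝ᵥ y) ^ 2 := by ring
  calc y ⬝ᵥ (S *ᵥ y) = Real.sqrt ((y ⬝ᵥ (S *ᵥ y)) ^ 2) := (Real.sqrt_sq hneg.le).symm
    _ ≤ Real.sqrt (Λ * (y ⬝ᵥ y) ^ 2) := Real.sqrt_le_sqrt h2
    _ = Real.sqrt Λ * (y ⬝ᵥ y) := by
        rw [Real.sqrt_mul hΛ0, Real.sqrt_sq (dot_self_nonneg y)]
    _ = specNorm S * (y ⬝ᵥ y) := rfl

lemma perm_orth {n : ℕ} (σ : Equiv.Perm (Fin n)) :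
    (σ.permMatrix ℝ)ᵀ * (σ.permMatrix ℝ) = 1 ∧
    (σ.permMatrix ℝ) * (σ.permMatrix ℝ)ᵀ = 1 := by
  have hT : (σ.permMatrix ℝ)ᵀ = (σ⁻¹).permMatrix ℝ := by
    show (σ.toPEquiv.toMatrix)ᵀ = (σ⁻¹).toPEquiv.toMatrix
    rw [← PEquiv.toMatrix_symm, ← Equiv.toPEquiv_symm]
    rfl
  constructor
  · rw [hT]
    show (σ⁻¹).toPEquiv.toMatrix * σ.toPEquiv.toMatrix = 1
    rw [← PEquiv.toMatrix_trans, ← Equiv.toPEquiv_trans]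
    have : (σ⁻¹ : Equiv.Perm (Fin n)).trans σ = Equiv.refl _ := by
      ext x; simp
    rw [this, Equiv.toPEquiv_refl, PEquiv.toMatrix_refl]
  · rw [hT]
    show σ.toPEquiv.toMatrix * (σ⁻¹).toPEquiv.toMatrix = 1
    rw [← PEquiv.toMatrix_trans, ← Equiv.toPEquiv_trans]
    have : σ.trans (σ⁻¹ : Equiv.Perm (Fin n)) = Equiv.refl _ := by
      ext x; simp
    rw [this, Equiv.toPEquiv_refl, PEquiv.toMatrix_refl]

end aux4
section aux5

lemma quad_E {k m : ℕ} (S : Matrix (Fin m) (Fin m) ℝ) (hS : 0 < m) (x : Fin (k + m) → ℝ) :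
    x ⬝ᵥ (((Matrix.reindex finSumFinEquiv finSumFinEquiv)
        (Matrix.fromBlocks 0 0 0 S) : Matrix (Fin (k + m)) (Fin (k + m)) ℝ) *ᵥ x)
      ≤ specNorm S * (x ⬝ᵥ x) := by
  classical
  set e : Fin k ⊕ Fin m ≃ Fin (k + m) := finSumFinEquiv
  set E : Matrix (Fin (k + m)) (Fin (k + m)) ℝ :=
    (Matrix.reindex e e) (Matrix.fromBlocks 0 0 0 S)
  set y : Fin m → ℝ := fun a => x (e (Sum.inr a)) with hy
  have hEntry : ∀ p q : Fin k ⊕ Fin m, E (e p) (e q) = Matrix.fromBlocks 0 0 0 S p q := by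
    intro p q
    simp [E, Matrix.reindex_apply, Matrix.submatrix_apply]
  have step1 : x ⬝ᵥ (E *ᵥ x) = y ⬝ᵥ (S *ᵥ y) := by
    have h1 : x ⬝ᵥ (E *ᵥ x) = ∑ p : Fin k ⊕ Fin m, x (e p) * (E *ᵥ x) (e p) := by
      rw [dotProduct]
      exact (Fintype.sum_equiv e _ _ fun p => rfl).symm
    have h2 : ∀ p : Fin k ⊕ Fin m, (E *ᵥ x) (e p)
        = ∑ q : Fin k ⊕ Fin m, Matrix.fromBlocks 0 0 0 S p q * x (e q) := by
      intro p
      show (E (e p)) ⬝ᵥ x = _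
      rw [dotProduct]
      refine (Fintype.sum_equiv e _ _ fun q => ?_).symm
      rw [hEntry p q]
    rw [h1]
    calc ∑ p : Fin k ⊕ Fin m, x (e p) * (E *ᵥ x) (e p)
        = ∑ p : Fin k ⊕ Fin m, x (e p) *
            (∑ q : Fin k ⊕ Fin m, Matrix.fromBlocks 0 0 0 S p q * x (e q)) := by
          exact Finset.sum_congr rfl fun p _ => by rw [h2 p]
      _ = ∑ a : Fin m, y a * (∑ b : Fin m, S a b * y b) := by
          rw [Fintype.sum_sum_type]
          have hzero : ∀ a : Fin k, x (e (Sum.inl a)) *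
              (∑ q : Fin k ⊕ Fin m, Matrix.fromBlocks 0 0 0 S (Sum.inl a) q * x (e q)) = 0 := by
            intro a
            have : ∀ q : Fin k ⊕ Fin m,
                Matrix.fromBlocks (0 : Matrix (Fin k) (Fin k) ℝ) 0 0 S (Sum.inl a) q = 0 := by
              intro q; rcases q with b | b <;> simp [Matrix.fromBlocks]
            simp [this]
          rw [Finset.sum_congr rfl fun a _ => hzero a]
          simp only [Finset.sum_const_zero, zero_add]
          refine Finset.sum_congr rfl fun a _ => ?_
          congr 1
          rw [Fintype.sum_sum_type]
          have : ∀ b : Fin k,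
              Matrix.fromBlocks (0 : Matrix (Fin k) (Fin k) ℝ) 0 0 S (Sum.inr a) (Sum.inl b)
                * x (e (Sum.inl b)) = 0 := by
            intro b; simp [Matrix.fromBlocks]
          rw [Finset.sum_congr rfl fun b _ => this b]
          simp [Matrix.fromBlocks]
          rfl
      _ = y ⬝ᵥ (S *ᵥ y) := by
          rw [dotProduct]
          refine Finset.sum_congr rfl fun a _ => ?_
          rfl
  have step2 : y ⬝ᵥ y ≤ x ⬝ᵥ x := by
    have h1 : x ⬝ᵥ x = ∑ p : Fin k ⊕ Fin m, x (e p) * x (e p) := by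
      rw [dotProduct]
      exact (Fintype.sum_equiv e _ _ fun p => rfl).symm
    rw [h1, Fintype.sum_sum_type]
    have : y ⬝ᵥ y = ∑ a : Fin m, x (e (Sum.inr a)) * x (e (Sum.inr a)) := rfl
    rw [this]
    have : (0:ℝ) ≤ ∑ a : Fin k, x (e (Sum.inl a)) * x (e (Sum.inl a)) :=
      Finset.sum_nonneg fun a _ => mul_self_nonneg _
    linarith
  rw [step1]
  calc y ⬝ᵥ (S *ᵥ y) ≤ specNorm S * (y ⬝ᵥ y) := quad_le_specNorm hS S y
    _ ≤ specNorm S * (x ⬝ᵥ x) := mul_le_mul_of_nonneg_left step2 (specNorm_nonneg S)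

end aux5
/-- If `Πᵀ A Π = L Lᵀ + [[0,0],[0,S]]` with `A` symmetric positive
semidefinite and `‖S‖₂ ≤ τ·λ_{k+1}(A)` for some `τ ≥ 1`, then for `1 ≤ j ≤ k`,
`σ_j²(L) ≥ λ_j(A) − τ·λ_{k+1}(A)`, i.e. `σ_j²(L) ≥ λ_j(A)·(1 − τ·λ_{k+1}(A)/λ_j(A))`. -/
theorem partial_cholesky_sval_lower_bound {k m : ℕ} (hm : 0 < m)
    (A : Matrix (Fin (k + m)) (Fin (k + m)) ℝ) (hA : A.PosSemidef)
    (σ : Equiv.Perm (Fin (k + m)))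
    (L : Matrix (Fin (k + m)) (Fin k) ℝ)
    (S : Matrix (Fin m) (Fin m) ℝ) (hS : S.PosSemidef)
    (hfact : (σ.permMatrix ℝ)ᵀ * A * σ.permMatrix ℝ =
      L * Lᵀ + (Matrix.reindex finSumFinEquiv finSumFinEquiv) (Matrix.fromBlocks 0 0 0 S))
    (τ : ℝ) (hτ : 1 ≤ τ)
    (hSτ : specNorm S ≤ τ * eigDesc hA.isHermitian ⟨k, by omega⟩) :
    ∀ j : Fin k,
      eigDesc hA.isHermitian (Fin.castAdd m j) - τ * eigDesc hA.isHermitian ⟨k, by omega⟩ ≤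
          sval L j ^ 2 ∧
      eigDesc hA.isHermitian (Fin.castAdd m j) *
          (1 - τ * eigDesc hA.isHermitian ⟨k, by omega⟩ /
            eigDesc hA.isHermitian (Fin.castAdd m j)) ≤ sval L j ^ 2 := by
  classical
  intro j
  have hk : k < k + m := by omega
  obtain ⟨hQ1, hQ2⟩ := perm_orth σ
  set Q : Matrix (Fin (k + m)) (Fin (k + m)) ℝ := σ.permMatrix ℝ with hQdef
  set C : Matrix (Fin (k + m)) (Fin (k + m)) ℝ := Qᵀ * A * Q with hCdef
  set B : Matrix (Fin (k + m)) (Fin (k + m)) ℝ := L * Lᵀ with hBdef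
  set E : Matrix (Fin (k + m)) (Fin (k + m)) ℝ :=
    (Matrix.reindex finSumFinEquiv finSumFinEquiv) (Matrix.fromBlocks 0 0 0 S) with hEdef
  have hfact' : C = B + E := hfact
  have hCHerm : C.IsHermitian := by
    have h := Matrix.isHermitian_conjTranspose_mul_mul Q hA.isHermitian
    rwa [Matrix.conjTranspose_eq_transpose_of_trivial] at h
  -- eigenvalues of A are dominated by those of the conjugated matrix C
  have hAC : ∀ i : Fin (k + m), eigDesc hA.isHermitian i ≤ eigDesc hCHerm i := by
    intro i
    obtain ⟨W, hWrk, hWq⟩ := exists_top_subspace hA.isHermitian i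
    have hinj : ∀ u ∈ W, (Matrix.mulVecLin Qᵀ) u = 0 → u = 0 := by
      intro u _ hu
      have h0 : Qᵀ *ᵥ u = 0 := hu
      have h1 : Q *ᵥ (Qᵀ *ᵥ u) = Q *ᵥ (0 : Fin (k + m) → ℝ) := by rw [h0]
      rwa [Matrix.mulVec_mulVec, hQ2, Matrix.one_mulVec, Matrix.mulVec_zero] at h1
    refine le_eigDesc_of_subspace hCHerm i _ (W.map (Matrix.mulVecLin Qᵀ)) ?_ ?_
    · rw [finrank_map_inj _ _ hinj]; exact hWrk
    · rintro x hx
      obtain ⟨u, huW, rfl⟩ := Submodule.mem_map.mp hx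
      have hx1 : (Matrix.mulVecLin Qᵀ) u = Qᵀ *ᵥ u := rfl
      rw [hx1]
      have hQu : Q *ᵥ (Qᵀ *ᵥ u) = u := by
        rw [Matrix.mulVec_mulVec, hQ2, Matrix.one_mulVec]
      have hdot : ∀ w : Fin (k + m) → ℝ, (Qᵀ *ᵥ u) ⬝ᵥ (Qᵀ *ᵥ w) = u ⬝ᵥ w := by
        intro w
        rw [Matrix.dotProduct_mulVec, Matrix.vecMul_transpose, hQu]
      have hCx : C *ᵥ (Qᵀ *ᵥ u) = Qᵀ *ᵥ (A *ᵥ u) := by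
        rw [hCdef, ← Matrix.mulVec_mulVec, ← Matrix.mulVec_mulVec, hQu]
      rw [hCx, hdot (A *ᵥ u), hdot u]
      exact hWq u huW
  have hLTL := Matrix.isHermitian_conjTranspose_mul_self L
  have hLTLpsd := Matrix.posSemidef_conjTranspose_mul_self L
  have hsv : sval L j ^ 2 = eigDesc hLTL j := Real.sq_sqrt (eigDesc_nonneg hLTLpsd j)
  have hEbound : ∀ u : Fin (k + m) → ℝ, u ⬝ᵥ (E *ᵥ u)
      ≤ (τ * eigDesc hA.isHermitian ⟨k, hk⟩) * (u ⬝ᵥ u) := by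
    intro u
    refine (quad_E S hm u).trans ?_
    exact mul_le_mul_of_nonneg_right hSτ (dot_self_nonneg u)
  have hBquad : ∀ u : Fin (k + m) → ℝ, u ⬝ᵥ (B *ᵥ u) = (Lᵀ *ᵥ u) ⬝ᵥ (Lᵀ *ᵥ u) := by
    intro u
    rw [hBdef, ← Matrix.mulVec_mulVec, Matrix.dotProduct_mulVec, ← Matrix.mulVec_transpose]
  have key : eigDesc hA.isHermitian (Fin.castAdd m j)
      - τ * eigDesc hA.isHermitian ⟨k, hk⟩ ≤ eigDesc hLTL j := by
    set lam : ℝ := eigDesc hA.isHermitian (Fin.castAdd m j) with hlam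
    set d : ℝ := τ * eigDesc hA.isHermitian ⟨k, hk⟩ with hd
    by_cases hc : lam - d ≤ 0
    · exact hc.trans (eigDesc_nonneg hLTLpsd j)
    push_neg at hc
    obtain ⟨T, hTrk, hTq⟩ := exists_top_subspace hCHerm (Fin.castAdd m j)
    have hTquad : ∀ u ∈ T, (lam - d) * (u ⬝ᵥ u) ≤ u ⬝ᵥ (B *ᵥ u) := by
      intro u huT
      have h1 : lam * (u ⬝ᵥ u) ≤ u ⬝ᵥ (C *ᵥ u) :=
        le_trans (mul_le_mul_of_nonneg_right (hAC _) (dot_self_nonneg u)) (hTq u huT)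
      have h2 : u ⬝ᵥ (C *ᵥ u) = u ⬝ᵥ (B *ᵥ u) + u ⬝ᵥ (E *ᵥ u) := by
        rw [hfact', Matrix.add_mulVec, dotProduct_add]
      have h3 := hEbound u
      nlinarith [h1, h2, h3]
    have hinj : ∀ u ∈ T, (Matrix.mulVecLin Lᵀ) u = 0 → u = 0 := by
      intro u huT hu
      have h0 : u ⬝ᵥ (B *ᵥ u) = 0 := by
        rw [hBquad u, show Lᵀ *ᵥ u = 0 from hu]
        simp
      have h1 := hTquad u huT
      rw [h0] at h1
      have h2 : u ⬝ᵥ u ≤ 0 := by nlinarith [dot_self_nonneg u]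
      exact dotProduct_self_eq_zero.mp (le_antisymm h2 (dot_self_nonneg u))
    refine le_eigDesc_of_subspace hLTL j _ (T.map (Matrix.mulVecLin Lᵀ)) ?_ ?_
    · rw [finrank_map_inj _ _ hinj]
      exact hTrk
    · rintro x hx
      obtain ⟨u, huT, rfl⟩ := Submodule.mem_map.mp hx
      have hx1 : (Matrix.mulVecLin Lᵀ) u = Lᵀ *ᵥ u := rfl
      rw [hx1]
      have hxx : (Lᵀ *ᵥ u) ⬝ᵥ (Lᵀ *ᵥ u) = u ⬝ᵥ (B *ᵥ u) := (hBquad u).symm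
      have hrhs : (Lᵀ *ᵥ u) ⬝ᵥ ((Lᴴ * L) *ᵥ (Lᵀ *ᵥ u)) = (B *ᵥ u) ⬝ᵥ (B *ᵥ u) := by
        rw [Matrix.conjTranspose_eq_transpose_of_trivial, ← Matrix.mulVec_mulVec, Matrix.dotProduct_mulVec (Lᵀ *ᵥ u) Lᵀ,
          Matrix.vecMul_transpose, Matrix.mulVec_mulVec, ← hBdef]
      rw [hxx, hrhs]
      have hCS : (u ⬝ᵥ (B *ᵥ u)) ^ 2 ≤ (u ⬝ᵥ u) * ((B *ᵥ u) ⬝ᵥ (B *ᵥ u)) := by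
        simpa [dotProduct, sq] using
          Finset.sum_mul_sq_le_sq_mul_sq Finset.univ u (B *ᵥ u)
      have ha := hTquad u huT
      have ha0 : 0 ≤ u ⬝ᵥ (B *ᵥ u) :=
        le_trans (mul_nonneg hc.le (dot_self_nonneg u)) ha
      by_cases ht : u ⬝ᵥ u = 0
      · have hu0 : u = 0 := dotProduct_self_eq_zero.mp ht
        subst hu0
        simp
      · have htpos : 0 < u ⬝ᵥ u := lt_of_le_of_ne (dot_self_nonneg u) (Ne.symm ht)
        have h5 : ((lam - d) * (u ⬝ᵥ u)) * (u ⬝ᵥ (B *ᵥ u))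
            ≤ (u ⬝ᵥ (B *ᵥ u)) * (u ⬝ᵥ (B *ᵥ u)) := mul_le_mul_of_nonneg_right ha ha0
        nlinarith [hCS, h5, htpos]
  constructor
  · rw [hsv]
    exact key
  · by_cases hl : eigDesc hA.isHermitian (Fin.castAdd m j) = 0
    · rw [hl]
      simp only [zero_mul]
      exact sq_nonneg _
    · have h2 : eigDesc hA.isHermitian (Fin.castAdd m j) *
          (1 - τ * eigDesc hA.isHermitian ⟨k, hk⟩ / eigDesc hA.isHermitian (Fin.castAdd m j))
          = eigDesc hA.isHermitian (Fin.castAdd m j)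
            - τ * eigDesc hA.isHermitian ⟨k, hk⟩ := by
        field_simp
      exact (le_of_eq h2).trans (by rw [hsv]; exact key)
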